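/- Let (C, ▷, p) be a cartesian category with a pointed endofunctor and † an operator satisfying the fixpoint identity f† = f ∘ (p_X × id_Y) ∘ ⟨f†, id_Y⟩. Then the morphism q_X = π_ℓ ∘ (▷π_r × id_X)† : X → ▷X equals the point p_X, for every object X. -/

import Mathlib

/-!
Write `g = (▷π_r × id)†`. Unfolding the fixpoint identity once gives `g = ⟨g ≫ p ≫ ▷π_r, id⟩`,
so `π_r ∘ g = id`, and by naturality of `p` also `π_ℓ ∘ g = p ∘ π_r ∘ g = p`.
-/

open CategoryTheory CategoryTheory.Limits

section FixpointOperator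

variable {C : Type*} [Category C] [HasBinaryProducts C] {F : C ⥤ C} {p : 𝟭 C ⟶ F}
  {dag : ∀ {X Y : C}, (F.obj X ⨯ Y ⟶ X) → (Y ⟶ X)}

theorem dag_eq_lift_comp
    (hfix : ∀ {X Y : C} (f : F.obj X ⨯ Y ⟶ X),
      dag f = prod.lift (dag f) (𝟙 Y) ≫ prod.map (p.app X) (𝟙 Y) ≫ f)
    {X Y : C} (f : F.obj X ⨯ Y ⟶ X) :
    dag f = prod.lift (dag f ≫ p.app X) (𝟙 Y) ≫ f := by
  conv_lhs => rw [hfix]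
  simp

theorem dag_prodMap_id_eq_lift
    (hfix : ∀ {X Y : C} (f : F.obj X ⨯ Y ⟶ X),
      dag f = prod.lift (dag f) (𝟙 Y) ≫ prod.map (p.app X) (𝟙 Y) ≫ f)
    {Z Y : C} (h : F.obj (Z ⨯ Y) ⟶ Z) :
    dag (prod.map h (𝟙 Y)) = prod.lift (dag (prod.map h (𝟙 Y)) ≫ p.app _ ≫ h) (𝟙 Y) := by
  conv_lhs => rw [dag_eq_lift_comp hfix]
  simp

theorem dag_prodMap_id_snd
    (hfix : ∀ {X Y : C} (f : F.obj X ⨯ Y ⟶ X),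
      dag f = prod.lift (dag f) (𝟙 Y) ≫ prod.map (p.app X) (𝟙 Y) ≫ f)
    {Z Y : C} (h : F.obj (Z ⨯ Y) ⟶ Z) :
    dag (prod.map h (𝟙 Y)) ≫ prod.snd = 𝟙 Y := by
  rw [dag_prodMap_id_eq_lift hfix, prod.lift_snd]

theorem dag_prodMap_id_fst
    (hfix : ∀ {X Y : C} (f : F.obj X ⨯ Y ⟶ X),
      dag f = prod.lift (dag f) (𝟙 Y) ≫ prod.map (p.app X) (𝟙 Y) ≫ f)
    {Z Y : C} (h : F.obj (Z ⨯ Y) ⟶ Z) :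
    dag (prod.map h (𝟙 Y)) ≫ prod.fst = dag (prod.map h (𝟙 Y)) ≫ p.app _ ≫ h := by
  conv_lhs => rw [dag_prodMap_id_eq_lift hfix]
  rw [prod.lift_fst]

end FixpointOperator

theorem stmt10 {C : Type*} [Category C] [HasFiniteProducts C]
    (F : C ⥤ C) (p : 𝟭 C ⟶ F)
    (dag : ∀ {X Y : C}, (F.obj X ⨯ Y ⟶ X) → (Y ⟶ X))
    (hfix : ∀ {X Y : C} (f : F.obj X ⨯ Y ⟶ X),
      dag f = prod.lift (dag f) (𝟙 Y) ≫ prod.map (p.app X) (𝟙 Y) ≫ f) :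
    ∀ X : C,
      dag (prod.map (F.map (prod.snd : F.obj X ⨯ X ⟶ X)) (𝟙 X)) ≫ prod.fst
        = p.app X := by
  intro X
  calc _ = dag (prod.map (F.map prod.snd) (𝟙 X)) ≫ p.app _ ≫ F.map prod.snd :=
        dag_prodMap_id_fst hfix _
    _ = (dag (prod.map (F.map prod.snd) (𝟙 X)) ≫ prod.snd) ≫ p.app X := by
        rw [← p.naturality, Category.assoc, Functor.id_map]
    _ = p.app X := by rw [dag_prodMap_id_snd hfix, Category.id_comp]
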